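/- Let a, σ > 0, b ≥ 0, τ > 0, T ∈ ℝ, let w ∈ [0, (k(0)−a)/σ²) where k(x) := √(a² + 2(1+b·x)·σ²), and let (φⱼ)ⱼ≥₀ be the solution of the recursive delayed Riccati system with final datum w. Let c ≥ 0 be any constant and define the sequence w̄₀ := max((k(0)−a)/σ², c) and w̄ⱼ₊₁ := max(w̄ⱼ, (k(w̄ⱼ)−a)/σ²) for j ≥ 0. Then for every j ≥ 0 and every t ∈ [T−(j+1)τ, T−jτ]: w ≤ Φ(t,T;w,0) ≤ φⱼ(t) ≤ Φ(t, T−jτ; w̄ⱼ, w̄ⱼ) ≤ w̄ⱼ₊₁. -/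

import Mathlib

/-- k(x) := √(a² + 2(1+b·x)·σ²). -/
noncomputable def kfun (a b σ x : ℝ) : ℝ := Real.sqrt (a ^ 2 + 2 * (1 + b * x) * σ ^ 2)

/-- The explicit solution Φ(t,T;ψ,γ) of the Riccati equation with constant coefficient γ. -/
noncomputable def Phi (a b σ ψ γ T t : ℝ) : ℝ :=
  ((kfun a b σ γ - a) / σ ^ 2 * (ψ + (a + kfun a b σ γ) / σ ^ 2) +
      (a + kfun a b σ γ) / σ ^ 2 * (ψ + (a - kfun a b σ γ) / σ ^ 2) *
        Real.exp (-(kfun a b σ γ) * (T - t))) /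
    ((ψ + (a + kfun a b σ γ) / σ ^ 2) +
      ((kfun a b σ γ - a) / σ ^ 2 - ψ) * Real.exp (-(kfun a b σ γ) * (T - t)))

/-- The domain [T−(j+1)τ, T−jτ] of the j-th component of the recursive delayed
Riccati system. -/
def riccatiDom (T τ : ℝ) (j : ℕ) : Set ℝ :=
  Set.Icc (T - ((j : ℝ) + 1) * τ) (T - (j : ℝ) * τ)

/-- The recursive delayed Riccati system with delay τ, horizon T and final datum w. -/
def DelayedRiccatiSol (a b σ τ T w : ℝ) (φ : ℕ → ℝ → ℝ) : Prop :=
  φ 0 T = w ∧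
  (∀ t ∈ riccatiDom T τ 0, HasDerivWithinAt (φ 0)
    (σ ^ 2 / 2 * (φ 0 t) ^ 2 + a * φ 0 t - 1) (riccatiDom T τ 0) t) ∧
  (∀ j : ℕ, φ (j + 1) (T - ((j : ℝ) + 1) * τ) = φ j (T - ((j : ℝ) + 1) * τ)) ∧
  (∀ j : ℕ, ∀ t ∈ riccatiDom T τ (j + 1), HasDerivWithinAt (φ (j + 1))
    (σ ^ 2 / 2 * (φ (j + 1) t) ^ 2 + a * φ (j + 1) t - 1 - b * φ j (t + τ))
    (riccatiDom T τ (j + 1)) t)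

/-!
Both bounds are instances of one comparison principle for the backward Riccati equation: if
`u' = σ²/2 u² + a u - g` and `v' = σ²/2 v² + a v - h` with `g ≤ h`, then `u ≤ v` at the right
endpoint propagates to the whole interval, because `u - v` solves a linear equation with a bounded
coefficient and the nonnegative source `h - g`. On its interval `φⱼ` has the forcing
`1 + b φⱼ₋₁(t + τ)`, which lies between `1` and `1 + b w̄ⱼ` once `0 ≤ φⱼ₋₁ ≤ w̄ⱼ` is known; so by
induction on `j`, with the matching condition supplying the endpoint values, `φⱼ` is squeezed
between the explicit solutions `Φ(·,T;w,0)` and `Φ(·,T−jτ;w̄ⱼ,w̄ⱼ)`. The outer bounds hold because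
`Φ(t,T;ψ,γ)` is a convex combination of `ψ` and the stationary point `(k(γ) − a)/σ²`.
-/

open Real Set

theorem nonpos_of_hasDerivWithinAt_le_mul {f f' : ℝ → ℝ} {a b K : ℝ}
    (hf : ContinuousOn f (Icc a b)) (hf' : ∀ x ∈ Ico a b, HasDerivWithinAt f (f' x) (Ici x) x)
    (bound : ∀ x ∈ Ico a b, 0 ≤ f x → f' x ≤ K * f x) (ha : f a ≤ 0) :
    ∀ x ∈ Icc a b, f x ≤ 0 := by
  intro x hx
  refine le_of_forall_pos_le_add fun ε hε => ?_
  -- the barrier `ε e^{(K+1)(y-x)}` is positive and grows strictly faster than `K` times itself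
  set B : ℝ → ℝ := fun y => ε * exp ((K + 1) * (y - x))
  have hB_pos : ∀ y, 0 < B y := fun y => by positivity
  have hB' : ∀ y, HasDerivAt B ((K + 1) * B y) y := fun y =>
    ((((hasDerivAt_id y).sub_const x).const_mul (K + 1)).exp.const_mul ε).congr_deriv
      (by simp only [B, id]; ring)
  have := image_le_of_deriv_right_lt_deriv_boundary hf hf' (ha.trans (hB_pos a).le) hB'
    (fun y hy hfy => by
      have := bound y hy (hfy ▸ (hB_pos y).le)
      rw [hfy] at this
      linarith [hB_pos y]) hx
  simpa [B] using this

theorem nonpos_of_hasDerivWithinAt_ge_neg_mul {f f' : ℝ → ℝ} {a b K : ℝ}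
    (hf : ∀ x ∈ Icc a b, HasDerivWithinAt f (f' x) (Icc a b) x)
    (bound : ∀ x ∈ Icc a b, 0 ≤ f x → -K * f x ≤ f' x) (hb : f b ≤ 0) :
    ∀ x ∈ Icc a b, f x ≤ 0 := by
  have hneg : ∀ {y}, y ∈ Icc (-b) (-a) ↔ -y ∈ Icc a b := by
    intro y; simp only [mem_Icc]; constructor <;> intro h <;> constructor <;> linarith [h.1, h.2]
  have hg : ∀ y ∈ Icc (-b) (-a), HasDerivWithinAt (fun y => f (-y)) (-f' (-y)) (Icc (-b) (-a)) y :=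
    fun y hy => by
      simpa [Function.comp_def] using
        (hf (-y) (hneg.1 hy)).comp y (hasDerivWithinAt_neg y _) fun z hz => hneg.1 hz
  have key := nonpos_of_hasDerivWithinAt_le_mul (f := fun y => f (-y)) (K := K)
    (fun y hy => (hg y hy).continuousWithinAt)
    (fun y hy => (hg y (Ico_subset_Icc_self hy)).mono_of_mem_nhdsWithin (Icc_mem_nhdsGE_of_mem hy))
    (fun y hy hfy => by linarith [bound (-y) (hneg.1 (Ico_subset_Icc_self hy)) hfy])
    (by simpa using hb)
  intro x hx
  simpa using key (-x) (hneg.2 (by simpa using hx))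

theorem le_of_riccati_forcing_le {α β s₀ s₁ : ℝ} {u v g h : ℝ → ℝ}
    (hu : ∀ t ∈ Icc s₀ s₁, HasDerivWithinAt u (α * u t ^ 2 + β * u t - g t) (Icc s₀ s₁) t)
    (hv : ∀ t ∈ Icc s₀ s₁, HasDerivWithinAt v (α * v t ^ 2 + β * v t - h t) (Icc s₀ s₁) t)
    (hgh : ∀ t ∈ Icc s₀ s₁, g t ≤ h t) (hend : u s₁ ≤ v s₁) :
    ∀ t ∈ Icc s₀ s₁, u t ≤ v t := by
  -- `u - v` solves the linear equation `f' = c f + (h - g)` with the bounded coefficient `c`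
  set c : ℝ → ℝ := fun t => α * (u t + v t) + β
  have hu_cont : ContinuousOn u (Icc s₀ s₁) := fun t ht => (hu t ht).continuousWithinAt
  have hv_cont : ContinuousOn v (Icc s₀ s₁) := fun t ht => (hv t ht).continuousWithinAt
  have hc : ContinuousOn c (Icc s₀ s₁) := by fun_prop
  obtain ⟨K, hK⟩ := isCompact_Icc.exists_bound_of_continuousOn hc
  have key := nonpos_of_hasDerivWithinAt_ge_neg_mul (f := fun t => u t - v t) (K := K)
    (fun t ht => (hu t ht).sub (hv t ht))
    (fun t ht hf => by
      have hct : -K ≤ c t := (abs_le.1 (hK t ht)).1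
      have : -K * (u t - v t) ≤ c t * (u t - v t) := mul_le_mul_of_nonneg_right hct hf
      linarith [hgh t ht])
    (sub_nonpos.2 hend)
  exact fun t ht => sub_nonpos.1 (key t ht)

section Phi

variable {a b σ ψ γ T t : ℝ}

theorem sq_kfun (hbγ : 0 ≤ b * γ) : kfun a b σ γ ^ 2 = a ^ 2 + 2 * (1 + b * γ) * σ ^ 2 :=
  sq_sqrt (by positivity)

theorem abs_lt_kfun (hσ : σ ≠ 0) (hbγ : 0 ≤ b * γ) : |a| < kfun a b σ γ := by
  rw [kfun, ← sqrt_sq_eq_abs]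
  exact sqrt_lt_sqrt (sq_nonneg a) (by nlinarith [pow_pos (abs_pos.2 hσ) 2, sq_abs σ])

theorem kfun_pos (hσ : σ ≠ 0) (hbγ : 0 ≤ b * γ) : 0 < kfun a b σ γ :=
  (abs_nonneg a).trans_lt (abs_lt_kfun hσ hbγ)

theorem exp_neg_kfun_mul_le_one (hσ : σ ≠ 0) (hbγ : 0 ≤ b * γ) (ht : t ≤ T) :
    exp (-kfun a b σ γ * (T - t)) ≤ 1 :=
  exp_le_one_iff.2 (mul_nonpos_of_nonpos_of_nonneg (neg_nonpos.2 (kfun_pos hσ hbγ).le)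
    (sub_nonneg.2 ht))

theorem Phi_denom_pos (hσ : σ ≠ 0) (hbγ : 0 ≤ b * γ) (hψ : 0 ≤ ψ) (ht : t ≤ T) :
    0 < ψ + (a + kfun a b σ γ) / σ ^ 2 +
      ((kfun a b σ γ - a) / σ ^ 2 - ψ) * exp (-kfun a b σ γ * (T - t)) := by
  obtain ⟨hka, hak⟩ := abs_lt.1 (abs_lt_kfun (a := a) hσ hbγ)
  have hE := exp_neg_kfun_mul_le_one (a := a) hσ hbγ ht
  have hA : 0 < (kfun a b σ γ - a) / σ ^ 2 := div_pos (by linarith) (by positivity)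
  have hB : 0 < (a + kfun a b σ γ) / σ ^ 2 := div_pos (by linarith) (by positivity)
  nlinarith [mul_nonneg hψ (sub_nonneg.2 hE), mul_pos hA (exp_pos (-kfun a b σ γ * (T - t)))]

theorem Phi_mem_uIcc (hσ : σ ≠ 0) (hbγ : 0 ≤ b * γ) (hψ : 0 ≤ ψ) (ht : t ≤ T) :
    Phi a b σ ψ γ T t ∈ uIcc ψ ((kfun a b σ γ - a) / σ ^ 2) := by
  have hD := Phi_denom_pos (a := a) hσ hbγ hψ ht
  have hE := exp_neg_kfun_mul_le_one (a := a) hσ hbγ ht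
  obtain ⟨hka, hak⟩ := abs_lt.1 (abs_lt_kfun (a := a) hσ hbγ)
  rw [← segment_eq_uIcc, Phi]
  set k := kfun a b σ γ
  set E := exp (-k * (T - t))
  set D := ψ + (a + k) / σ ^ 2 + ((k - a) / σ ^ 2 - ψ) * E
  have hB : 0 < (a + k) / σ ^ 2 := div_pos (by linarith) (by positivity)
  -- `Phi` is the convex combination of `ψ` and `(k - a) / σ²` with these weights
  refine ⟨2 * k / σ ^ 2 * E / D, (ψ + (a + k) / σ ^ 2) * (1 - E) / D,
    div_nonneg (mul_nonneg (div_nonneg (by linarith) (sq_nonneg σ)) (exp_pos _).le) hD.le,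
    div_nonneg (mul_nonneg (by linarith) (sub_nonneg.2 hE)) hD.le, ?_, ?_⟩
  · rw [← add_div, div_eq_one_iff_eq hD.ne']
    ring
  · rw [smul_eq_mul, smul_eq_mul, eq_div_iff hD.ne']
    field_simp
    ring

theorem le_Phi (hσ : σ ≠ 0) (hbγ : 0 ≤ b * γ) (hψ : 0 ≤ ψ)
    (hψk : ψ ≤ (kfun a b σ γ - a) / σ ^ 2) (ht : t ≤ T) : ψ ≤ Phi a b σ ψ γ T t := by
  have h := Phi_mem_uIcc (a := a) hσ hbγ hψ ht
  rw [uIcc_of_le hψk] at h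
  exact h.1

theorem Phi_le_max (hσ : σ ≠ 0) (hbγ : 0 ≤ b * γ) (hψ : 0 ≤ ψ) (ht : t ≤ T) :
    Phi a b σ ψ γ T t ≤ max ψ ((kfun a b σ γ - a) / σ ^ 2) :=
  (Phi_mem_uIcc hσ hbγ hψ ht).2

theorem Phi_nonneg (hσ : σ ≠ 0) (hbγ : 0 ≤ b * γ) (hψ : 0 ≤ ψ) (ht : t ≤ T) :
    0 ≤ Phi a b σ ψ γ T t := by
  have hk : 0 ≤ (kfun a b σ γ - a) / σ ^ 2 :=
    div_nonneg (by linarith [le_abs_self a, abs_lt_kfun (a := a) hσ hbγ]) (sq_nonneg σ)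
  exact (le_min hψ hk).trans (Phi_mem_uIcc hσ hbγ hψ ht).1

theorem Phi_self (hσ : σ ≠ 0) (hbγ : 0 ≤ b * γ) : Phi a b σ ψ γ T T = ψ := by
  have hk := kfun_pos (a := a) hσ hbγ
  rw [Phi, sub_self, mul_zero, exp_zero, mul_one, div_eq_iff (by field_simp; ring_nf; positivity)]
  field_simp
  ring

theorem hasDerivAt_Phi (hσ : σ ≠ 0) (hbγ : 0 ≤ b * γ) (hψ : 0 ≤ ψ) (ht : t ≤ T) :
    HasDerivAt (Phi a b σ ψ γ T)
      (σ ^ 2 / 2 * Phi a b σ ψ γ T t ^ 2 + a * Phi a b σ ψ γ T t - (1 + b * γ)) t := by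
  have hD := Phi_denom_pos (a := a) hσ hbγ hψ ht
  have hk2 := sq_kfun (a := a) (σ := σ) hbγ
  show HasDerivAt (fun s => Phi a b σ ψ γ T s) _ t
  simp only [Phi]
  set k := kfun a b σ γ
  have hE : HasDerivAt (fun s => exp (-k * (T - s))) (k * exp (-k * (T - t))) t :=
    ((((hasDerivAt_id t).const_sub T).const_mul (-k)).exp).congr_deriv (by simp only [id]; ring)
  refine (((hE.const_mul ((a + k) / σ ^ 2 * (ψ + (a - k) / σ ^ 2))).const_add
    ((k - a) / σ ^ 2 * (ψ + (a + k) / σ ^ 2))).div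
    ((hE.const_mul ((k - a) / σ ^ 2 - ψ)).const_add (ψ + (a + k) / σ ^ 2)) hD.ne').congr_deriv ?_
  have h1 : 1 + b * γ = (k ^ 2 - a ^ 2) / (2 * σ ^ 2) := by
    rw [hk2]; field_simp; ring
  rw [h1]
  set E := exp (-k * (T - t))
  set D := ψ + (a + k) / σ ^ 2 + ((k - a) / σ ^ 2 - ψ) * E
  have hD0 : D ≠ 0 := hD.ne'
  field_simp
  simp only [D]
  field_simp
  ring

end Phi

theorem mem_Icc_Phi_of_riccati {a b σ w ψ T s₀ s₁ : ℝ} {u g : ℝ → ℝ} (hσ : σ ≠ 0) (hb : 0 ≤ b)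
    (hw : 0 ≤ w) (hψ : 0 ≤ ψ) (hs₁ : s₁ ≤ T)
    (hu : ∀ t ∈ Icc s₀ s₁, HasDerivWithinAt u (σ ^ 2 / 2 * u t ^ 2 + a * u t - g t) (Icc s₀ s₁) t)
    (hg : ∀ t ∈ Icc s₀ s₁, g t ∈ Icc 1 (1 + b * ψ))
    (hend : u s₁ ∈ Icc (Phi a b σ w 0 T s₁) ψ) :
    ∀ t ∈ Icc s₀ s₁, u t ∈ Icc (Phi a b σ w 0 T t) (Phi a b σ ψ ψ s₁ t) := by
  have hb0 : 0 ≤ b * 0 := (mul_zero b).ge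
  have hbψ : 0 ≤ b * ψ := mul_nonneg hb hψ
  have hlow := le_of_riccati_forcing_le (g := fun _ => 1 + b * 0) (h := g)
    (fun t ht => (hasDerivAt_Phi hσ hb0 hw (ht.2.trans hs₁)).hasDerivWithinAt) hu
    (fun t ht => by simpa using (hg t ht).1) hend.1
  have hup := le_of_riccati_forcing_le (g := g) (h := fun _ => 1 + b * ψ) hu
    (fun t ht => (hasDerivAt_Phi hσ hbψ hψ ht.2).hasDerivWithinAt) (fun t ht => (hg t ht).2)
    (by rw [Phi_self hσ hbψ]; exact hend.2)
  exact fun t ht => ⟨hlow t ht, hup t ht⟩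

section riccatiDom

variable {T τ t : ℝ} {j : ℕ}

theorem le_of_mem_riccatiDom (hτ : 0 ≤ τ) (ht : t ∈ riccatiDom T τ j) : t ≤ T :=
  ht.2.trans (sub_le_self T (mul_nonneg j.cast_nonneg hτ))

theorem add_mem_riccatiDom (ht : t ∈ riccatiDom T τ (j + 1)) : t + τ ∈ riccatiDom T τ j := by
  obtain ⟨h₀, h₁⟩ := ht
  push_cast at h₀ h₁
  constructor <;> linarith

theorem left_mem_riccatiDom (hτ : 0 ≤ τ) : T - ((j : ℝ) + 1) * τ ∈ riccatiDom T τ j :=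
  ⟨le_rfl, by linarith⟩

end riccatiDom

theorem DelayedRiccatiSol.mem_Icc_Phi {a b σ τ T w : ℝ} {φ : ℕ → ℝ → ℝ} {wbar : ℕ → ℝ}
    (hφ : DelayedRiccatiSol a b σ τ T w φ) (hσ : σ ≠ 0) (hb : 0 ≤ b) (hτ : 0 ≤ τ) (hw : 0 ≤ w)
    (hw_le : w ≤ wbar 0)
    (hwbar : ∀ j, max (wbar j) ((kfun a b σ (wbar j) - a) / σ ^ 2) ≤ wbar (j + 1)) (j : ℕ) :
    ∀ t ∈ riccatiDom T τ j,
      φ j t ∈ Icc (Phi a b σ w 0 T t) (Phi a b σ (wbar j) (wbar j) (T - j * τ) t) := by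
  obtain ⟨hφ_end, hφ_zero, hφ_match, hφ_succ⟩ := hφ
  have hb0 : 0 ≤ b * 0 := (mul_zero b).ge
  have hwbar_nonneg : ∀ j, 0 ≤ wbar j := fun j => (hw.trans hw_le).trans
    (monotone_nat_of_le_succ (fun j => (le_max_left _ _).trans (hwbar j)) j.zero_le)
  have hrange : ∀ j, ∀ t ∈ riccatiDom T τ j,
      φ j t ∈ Icc (Phi a b σ w 0 T t) (Phi a b σ (wbar j) (wbar j) (T - j * τ) t) →
      φ j t ∈ Icc 0 (wbar (j + 1)) := fun j t ht h =>
    ⟨(Phi_nonneg hσ hb0 hw (le_of_mem_riccatiDom hτ ht)).trans h.1,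
      h.2.trans ((Phi_le_max hσ (mul_nonneg hb (hwbar_nonneg j)) (hwbar_nonneg j) ht.2).trans
        (hwbar j))⟩
  induction j with
  | zero =>
    refine mem_Icc_Phi_of_riccati (g := fun _ => 1) hσ hb hw (hwbar_nonneg 0) (by simp) hφ_zero
      (fun _ _ => ⟨le_rfl, le_add_of_nonneg_right (mul_nonneg hb (hwbar_nonneg 0))⟩) ?_
    simp only [Nat.cast_zero, zero_mul, sub_zero, hφ_end]
    exact ⟨(Phi_self hσ hb0).le, hw_le⟩
  | succ j ih =>
    refine mem_Icc_Phi_of_riccati (g := fun t => 1 + b * φ j (t + τ)) hσ hb hw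
      (hwbar_nonneg (j + 1)) (sub_le_self T (mul_nonneg (j + 1).cast_nonneg hτ))
      (fun t ht => (hφ_succ j t ht).congr_deriv (by ring)) (fun t ht => ?_) ?_
    · have hτt := add_mem_riccatiDom ht
      obtain ⟨h₀, h₁⟩ := hrange j _ hτt (ih _ hτt)
      exact ⟨le_add_of_nonneg_right (mul_nonneg hb h₀), by gcongr⟩
    · have hleft := left_mem_riccatiDom (T := T) (j := j) hτ
      rw [Nat.cast_succ, hφ_match j]
      exact ⟨(ih _ hleft).1, (hrange j _ hleft (ih _ hleft)).2⟩

theorem delayed_riccati_bounds_general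
    (a b σ τ T w c : ℝ) (hσ : 0 < σ) (hb : 0 ≤ b) (hτ : 0 < τ)
    (hw : w ∈ Set.Ico (0 : ℝ) ((kfun a b σ 0 - a) / σ ^ 2))
    (φ : ℕ → ℝ → ℝ) (hφ : DelayedRiccatiSol a b σ τ T w φ)
    (wbar : ℕ → ℝ)
    (hwbar0 : wbar 0 = max ((kfun a b σ 0 - a) / σ ^ 2) c)
    (hwbar : ∀ j : ℕ, wbar (j + 1) = max (wbar j) ((kfun a b σ (wbar j) - a) / σ ^ 2)) :
    ∀ j : ℕ, ∀ t ∈ riccatiDom T τ j,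
      w ≤ Phi a b σ w 0 T t ∧
      Phi a b σ w 0 T t ≤ φ j t ∧
      φ j t ≤ Phi a b σ (wbar j) (wbar j) (T - (j : ℝ) * τ) t ∧
      Phi a b σ (wbar j) (wbar j) (T - (j : ℝ) * τ) t ≤ wbar (j + 1) := by
  have hw_le : w ≤ wbar 0 := hwbar0 ▸ le_max_of_le_left hw.2.le
  have hwbar_le : ∀ j, max (wbar j) ((kfun a b σ (wbar j) - a) / σ ^ 2) ≤ wbar (j + 1) :=
    fun j => (hwbar j).ge
  intro j t ht
  have hwbar_nonneg : 0 ≤ wbar j := (hw.1.trans hw_le).trans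
    (monotone_nat_of_le_succ (fun j => (le_max_left _ _).trans (hwbar_le j)) j.zero_le)
  obtain ⟨hlow, hup⟩ := hφ.mem_Icc_Phi hσ.ne' hb hτ.le hw.1 hw_le hwbar_le j t ht
  exact ⟨le_Phi hσ.ne' (mul_zero b).ge hw.1 hw.2.le (le_of_mem_riccatiDom hτ.le ht), hlow, hup,
    (Phi_le_max hσ.ne' (mul_nonneg hb hwbar_nonneg) hwbar_nonneg ht.2).trans (hwbar j).ge⟩

/-- bounds for the solution of the recursive delayed Riccati system:
with w̄₀ := max((k(0)−a)/σ², c) and w̄ⱼ₊₁ := max(w̄ⱼ, (k(w̄ⱼ)−a)/σ²), for every j and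
every t ∈ [T−(j+1)τ, T−jτ],
w ≤ Φ(t,T;w,0) ≤ φⱼ(t) ≤ Φ(t,T−jτ;w̄ⱼ,w̄ⱼ) ≤ w̄ⱼ₊₁. -/
theorem delayed_riccati_bounds
    (a b σ τ T w c : ℝ) (ha : 0 < a) (hσ : 0 < σ) (hb : 0 ≤ b) (hτ : 0 < τ)
    (hw : w ∈ Set.Ico (0 : ℝ) ((kfun a b σ 0 - a) / σ ^ 2)) (hc : 0 ≤ c)
    (φ : ℕ → ℝ → ℝ) (hφ : DelayedRiccatiSol a b σ τ T w φ)
    (wbar : ℕ → ℝ)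
    (hwbar0 : wbar 0 = max ((kfun a b σ 0 - a) / σ ^ 2) c)
    (hwbar : ∀ j : ℕ, wbar (j + 1) = max (wbar j) ((kfun a b σ (wbar j) - a) / σ ^ 2)) :
    ∀ j : ℕ, ∀ t ∈ riccatiDom T τ j,
      w ≤ Phi a b σ w 0 T t ∧
      Phi a b σ w 0 T t ≤ φ j t ∧
      φ j t ≤ Phi a b σ (wbar j) (wbar j) (T - (j : ℝ) * τ) t ∧
      Phi a b σ (wbar j) (wbar j) (T - (j : ℝ) * τ) t ≤ wbar (j + 1) :=
  delayed_riccati_bounds_general a b σ τ T w c hσ hb hτ hw φ hφ wbar hwbar0 hwbar
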